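/- If ℓ satisfies both the optimal stationarity condition and the MSE relation condition (∇_q ℓ(q,u) = 0 if and only if q = u), then any stationary point θ of L at which rank(∂û_X(θ)/∂θ) = N D_u is a global minimum of the mean squared error loss L_MSE(θ) = (1/N) Σ_{i=1}^N ‖û_θ(x_i) − u_i‖₂², i.e. L_MSE(θ) = 0. -/

import Mathlib

open scoped BigOperators RealInnerProductSpace

noncomputable section

/-! By the chain rule, `dL(θ)` is `(1/N)` times the separable functional
`w ↦ Σᵢ dℓ(·, uᵢ)(û_θ(xᵢ)) wᵢ` composed with the stacked Jacobian `∂û_X/∂θ`. Full row rank makes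
that Jacobian surjective, so at a stationary point the functional itself vanishes; testing it on
vectors supported in a single sample shows that every per-sample gradient vanishes, and the MSE
relation condition then forces `û_θ(xᵢ) = uᵢ` for all `i`. -/

open Function

theorem LinearMap.surjective_of_rank_eq_finrank {K V W : Type*} [DivisionRing K]
    [AddCommGroup V] [Module K V] [AddCommGroup W] [Module K W] [FiniteDimensional K W]
    (f : V →ₗ[K] W) (h : f.rank = Module.finrank K W) : Surjective f :=
  range_eq_top.mp <| Submodule.eq_top_of_finrank_eq <| Module.finrank_eq_of_rank_eq h

theorem gradient_eq_zero_iff_fderiv_eq_zero {𝕜 F : Type*} [RCLike 𝕜] [NormedAddCommGroup F]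
    [InnerProductSpace 𝕜 F] [CompleteSpace F] {f : F → 𝕜} {x : F} :
    gradient f x = 0 ↔ fderiv 𝕜 f x = 0 := by
  rw [← toDual_gradient, LinearIsometryEquiv.map_eq_zero_iff]

section SeparableSum

variable {𝕜 ι E F G : Type*} [NontriviallyNormedField 𝕜] [Fintype ι]
  [NormedAddCommGroup E] [NormedSpace 𝕜 E] [NormedAddCommGroup F] [NormedSpace 𝕜 F]
  [NormedAddCommGroup G] [NormedSpace 𝕜 G] {φ : ι → F → G}

theorem hasFDerivAt_sum_apply {φ' : ι → F →L[𝕜] G} {y : ι → F}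
    (hφ : ∀ i, HasFDerivAt (φ i) (φ' i) (y i)) :
    HasFDerivAt (fun z : ι → F => ∑ i, φ i (z i)) (∑ i, (φ' i).comp (.proj i)) y :=
  HasFDerivAt.fun_sum fun i _ => (hφ i).comp y (hasFDerivAt_apply i y)

theorem fderiv_eq_zero_of_fderiv_sum_apply_eq_zero {y : ι → F}
    (hφ : ∀ i, DifferentiableAt 𝕜 (φ i) (y i))
    (h : fderiv 𝕜 (fun z : ι → F => ∑ i, φ i (z i)) y = 0) (i : ι) :
    fderiv 𝕜 (φ i) (y i) = 0 := by
  classical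
  ext w
  have := congr($((hasFDerivAt_sum_apply fun i => (hφ i).hasFDerivAt).fderiv.symm.trans h)
    (Pi.single i w))
  simpa [Pi.single_apply, apply_ite] using this

theorem fderiv_eq_zero_of_fderiv_sum_comp_eq_zero {f : E → ι → F} {x : E}
    (hf : DifferentiableAt 𝕜 f x) (hsurj : Surjective (fderiv 𝕜 f x))
    (hφ : ∀ i, DifferentiableAt 𝕜 (φ i) (f x i))
    (h : fderiv 𝕜 (fun x => ∑ i, φ i (f x i)) x = 0) (i : ι) :
    fderiv 𝕜 (φ i) (f x i) = 0 := by
  refine fderiv_eq_zero_of_fderiv_sum_apply_eq_zero hφ ?_ i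
  have hΦ := (hasFDerivAt_sum_apply fun i => (hφ i).hasFDerivAt).differentiableAt
  rw [fderiv_fun_comp x hΦ hf] at h
  ext w
  obtain ⟨v, rfl⟩ := hsurj w
  exact congr($h v)

end SeparableSum

theorem stationary_point_is_global_min_of_MSE_general
    {Du N Dθ : ℕ}
    (U : Set (EuclideanSpace ℝ (Fin Du)))
    (ℓ : EuclideanSpace ℝ (Fin Du) → EuclideanSpace ℝ (Fin Du) → ℝ)
    (u : Fin N → EuclideanSpace ℝ (Fin Du)) (hu : ∀ i, u i ∈ U)
    (model : EuclideanSpace ℝ (Fin Dθ) → Fin N → EuclideanSpace ℝ (Fin Du))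
    (hmodel : ∀ i, Differentiable ℝ fun θ => model θ i)
    (hosc : ∀ v ∈ U, ∀ q : EuclideanSpace ℝ (Fin Du),
      DifferentiableAt ℝ (fun p => ℓ p v) q ∧
        (gradient (fun p => ℓ p v) q = 0 → ∀ q', ℓ q v ≤ ℓ q' v))
    (hmse : ∀ v ∈ U, ∀ q : EuclideanSpace ℝ (Fin Du),
      gradient (fun p => ℓ p v) q = 0 ↔ q = v)
    (L : EuclideanSpace ℝ (Fin Dθ) → ℝ)
    (hL : L = fun θ => (1 / (N : ℝ)) * ∑ i, ℓ (model θ i) (u i))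
    (θ : EuclideanSpace ℝ (Fin Dθ))
    (hstat : gradient L θ = 0)
    (hrank : LinearMap.rank
        (fderiv ℝ (fun θ' => (fun i => model θ' i)) θ).toLinearMap
        = ((N * Du : ℕ) : Cardinal)) :
    (1 / (N : ℝ)) * ∑ i, ‖model θ i - u i‖ ^ 2 = 0 := by
  obtain rfl | hN := N.eq_zero_or_pos
  · simp
  have hstack : DifferentiableAt ℝ (fun θ' i => model θ' i) θ :=
    differentiableAt_pi.2 fun i => hmodel i θ
  have hsurj : Surjective (fderiv ℝ (fun θ' i => model θ' i) θ) :=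
    LinearMap.surjective_of_rank_eq_finrank _ (by
      rw [hrank, Module.finrank_pi_fintype, finrank_euclideanSpace, Finset.sum_const]
      simp)
  have hsum : fderiv ℝ (fun θ' => ∑ i, ℓ (model θ' i) (u i)) θ = 0 := by
    have hL' : L = (1 / (N : ℝ)) • fun θ' => ∑ i, ℓ (model θ' i) (u i) := hL
    rw [gradient_eq_zero_iff_fderiv_eq_zero, hL', fderiv_const_smul_field, Pi.smul_apply,
      smul_eq_zero] at hstat
    exact hstat.resolve_left (by positivity)
  have hfit : ∀ i, model θ i = u i := fun i =>
    (hmse _ (hu i) _).1 <| gradient_eq_zero_iff_fderiv_eq_zero.2 <|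
      fderiv_eq_zero_of_fderiv_sum_comp_eq_zero hstack hsurj
        (fun i => (hosc _ (hu i) _).1) hsum i
  simp [hfit]

/-- If the loss `ℓ` satisfies both the optimal stationarity condition and the
MSE relation condition (`∇_q ℓ(q,u) = 0 ↔ q = u`), then any stationary point `θ` of `L` at
which the Jacobian of the stacked output map has full row rank `N·Du` is a global minimum of
the mean squared error loss, i.e. `L_MSE(θ) = 0`. -/
theorem stationary_point_is_global_min_of_MSE
    {Du N Dθ : ℕ} (hN : 0 < N)
    (U : Set (EuclideanSpace ℝ (Fin Du)))
    (ℓ : EuclideanSpace ℝ (Fin Du) → EuclideanSpace ℝ (Fin Du) → ℝ)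
    (u : Fin N → EuclideanSpace ℝ (Fin Du)) (hu : ∀ i, u i ∈ U)
    (model : EuclideanSpace ℝ (Fin Dθ) → Fin N → EuclideanSpace ℝ (Fin Du))
    (hmodel : ∀ i, Differentiable ℝ fun θ => model θ i)
    (hosc : ∀ v ∈ U, ∀ q : EuclideanSpace ℝ (Fin Du),
      DifferentiableAt ℝ (fun p => ℓ p v) q ∧
        (gradient (fun p => ℓ p v) q = 0 → ∀ q', ℓ q v ≤ ℓ q' v))
    (hmse : ∀ v ∈ U, ∀ q : EuclideanSpace ℝ (Fin Du),
      gradient (fun p => ℓ p v) q = 0 ↔ q = v)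
    (L : EuclideanSpace ℝ (Fin Dθ) → ℝ)
    (hL : L = fun θ => (1 / (N : ℝ)) * ∑ i, ℓ (model θ i) (u i))
    (θ : EuclideanSpace ℝ (Fin Dθ))
    (hstat : gradient L θ = 0)
    (hrank : LinearMap.rank
        (fderiv ℝ (fun θ' => (fun i => model θ' i)) θ).toLinearMap
        = ((N * Du : ℕ) : Cardinal)) :
    (1 / (N : ℝ)) * ∑ i, ‖model θ i - u i‖ ^ 2 = 0 :=
  stationary_point_is_global_min_of_MSE_general U ℓ u hu model hmodel hosc hmse L hL θ hstat hrank
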